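/- arXiv:2411.05678 — 2 statements merged into one kernel-verified Lean document; each statement's English description precedes it below -/
import Mathlib

section
/- Let (X, d) be a metric space and A ⊆ X nonempty closed. Every positive linear functional T : Lip(X, A) → ℝ is bounded with respect to the Lipschitz-constant norm, and its operator norm equals T(d_A). -/
/-!
A positive linear functional is monotone, so `|f| ≤ g` forces `|T f| ≤ T g`. Every 1-Lipschitz
`f` vanishing on `A` satisfies `|f| ≤ d_A`, since `|f x| = |f x - f a| ≤ d(x, a)` for all `a ∈ A`;
hence `|T f| ≤ T(d_A)`, and the bound is attained at `f = d_A` itself.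
-/

open Metric

theorem abs_le_mul_infDist_of_lipschitzWith {X : Type*} [PseudoMetricSpace X] {A : Set X}
    (hA : A.Nonempty) {K : NNReal} {f : X → ℝ} (hf : LipschitzWith K f)
    (hf0 : ∀ a ∈ A, f a = 0) (x : X) :
    |f x| ≤ K * infDist x A := by
  have : Nonempty A := hA.to_subtype
  rw [infDist_eq_iInf, Real.mul_iInf_of_nonneg K.coe_nonneg]
  refine le_ciInf fun ⟨a, ha⟩ => ?_
  simpa [Real.dist_eq, hf0 a ha] using hf.dist_le_mul x a

section PositiveFunctional

variable {X : Type*} [PseudoMetricSpace X] {A : Set X} {T : (X → ℝ) → ℝ}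
  (Tadd : ∀ f g : X → ℝ,
    (∃ K : NNReal, LipschitzWith K f) → (∀ a ∈ A, f a = 0) →
    (∃ K : NNReal, LipschitzWith K g) → (∀ a ∈ A, g a = 0) →
    T (f + g) = T f + T g)
  (Tsmul : ∀ (c : ℝ) (f : X → ℝ),
    (∃ K : NNReal, LipschitzWith K f) → (∀ a ∈ A, f a = 0) →
    T (c • f) = c * T f)
  (Tpos : ∀ f : X → ℝ,
    (∃ K : NNReal, LipschitzWith K f) → (∀ a ∈ A, f a = 0) →
    (∀ x, 0 ≤ f x) → 0 ≤ T f)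
  {f g : X → ℝ} (hf : ∃ K : NNReal, LipschitzWith K f) (hf0 : ∀ a ∈ A, f a = 0)
  (hg : ∃ K : NNReal, LipschitzWith K g) (hg0 : ∀ a ∈ A, g a = 0)

include Tadd Tpos hf hf0 hg hg0 in
theorem le_of_forall_le_of_positive (hfg : ∀ x, f x ≤ g x) : T f ≤ T g := by
  obtain ⟨Kf, hKf⟩ := hf
  obtain ⟨Kg, hKg⟩ := hg
  have hdiff : ∃ K : NNReal, LipschitzWith K (g - f) := ⟨Kg + Kf, hKg.sub hKf⟩
  have hdiff0 : ∀ a ∈ A, (g - f) a = 0 := fun a ha => by simp [hf0 a ha, hg0 a ha]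
  have hsplit : T g = T f + T (g - f) := by
    rw [← Tadd f (g - f) ⟨Kf, hKf⟩ hf0 hdiff hdiff0, add_sub_cancel]
  have := Tpos (g - f) hdiff hdiff0 fun x => sub_nonneg.mpr (hfg x)
  linarith

include Tadd Tsmul Tpos hf hf0 hg hg0 in
theorem abs_le_of_forall_abs_le_of_positive (hfg : ∀ x, |f x| ≤ g x) : |T f| ≤ T g := by
  obtain ⟨Kf, hKf⟩ := hf
  have hneg : T ((-1 : ℝ) • f) = -T f := by rw [Tsmul (-1) f ⟨Kf, hKf⟩ hf0, neg_one_mul]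
  have hneg_le : T ((-1 : ℝ) • f) ≤ T g := by
    refine le_of_forall_le_of_positive Tadd Tpos ⟨Kf, ?_⟩ (fun a ha => ?_) hg hg0 fun x => ?_
    · simpa only [neg_one_smul] using hKf.neg
    · simp [hf0 a ha]
    · simpa using neg_le.mp (abs_le.mp (hfg x)).1
  have hle : T f ≤ T g :=
    le_of_forall_le_of_positive Tadd Tpos ⟨Kf, hKf⟩ hf0 hg hg0 fun x => (abs_le.mp (hfg x)).2
  rw [abs_le]
  constructor <;> linarith

end PositiveFunctional

theorem stmt13_general {X : Type*} [MetricSpace X] {A : Set X}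
    (hAne : A.Nonempty)
    (T : (X → ℝ) → ℝ)
    (Tadd : ∀ f g : X → ℝ,
      (∃ K : NNReal, LipschitzWith K f) → (∀ a ∈ A, f a = 0) →
      (∃ K : NNReal, LipschitzWith K g) → (∀ a ∈ A, g a = 0) →
      T (f + g) = T f + T g)
    (Tsmul : ∀ (c : ℝ) (f : X → ℝ),
      (∃ K : NNReal, LipschitzWith K f) → (∀ a ∈ A, f a = 0) →
      T (c • f) = c * T f)
    (Tpos : ∀ f : X → ℝ,
      (∃ K : NNReal, LipschitzWith K f) → (∀ a ∈ A, f a = 0) →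
      (∀ x, 0 ≤ f x) → 0 ≤ T f) :
    IsLUB {r : ℝ | ∃ f : X → ℝ, LipschitzWith 1 f ∧ (∀ a ∈ A, f a = 0) ∧ r = |T f|}
      (T (fun x => Metric.infDist x A)) := by
  have hd : LipschitzWith 1 (infDist · A) := lipschitz_infDist_pt A
  have hd0 : ∀ a ∈ A, infDist a A = 0 := fun a ha => infDist_zero_of_mem ha
  refine IsGreatest.isLUB ⟨⟨_, hd, hd0, ?_⟩, ?_⟩
  · exact (abs_of_nonneg (Tpos _ ⟨1, hd⟩ hd0 fun x => infDist_nonneg)).symm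
  · rintro _ ⟨f, hf, hf0, rfl⟩
    refine abs_le_of_forall_abs_le_of_positive Tadd Tsmul Tpos ⟨1, hf⟩ hf0 ⟨1, hd⟩ hd0 fun x => ?_
    simpa using abs_le_mul_infDist_of_lipschitzWith hAne hf hf0 x

/-- Every positive linear functional `T` on `Lip(X, A)` is bounded with respect
to the Lipschitz-constant norm, and its operator norm (the supremum of `|T f|`
over the unit ball) equals `T(d_A)`. -/
theorem stmt13 {X : Type*} [MetricSpace X] {A : Set X}
    (hA : IsClosed A) (hAne : A.Nonempty)
    (T : (X → ℝ) → ℝ)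
    (Tadd : ∀ f g : X → ℝ,
      (∃ K : NNReal, LipschitzWith K f) → (∀ a ∈ A, f a = 0) →
      (∃ K : NNReal, LipschitzWith K g) → (∀ a ∈ A, g a = 0) →
      T (f + g) = T f + T g)
    (Tsmul : ∀ (c : ℝ) (f : X → ℝ),
      (∃ K : NNReal, LipschitzWith K f) → (∀ a ∈ A, f a = 0) →
      T (c • f) = c * T f)
    (Tpos : ∀ f : X → ℝ,
      (∃ K : NNReal, LipschitzWith K f) → (∀ a ∈ A, f a = 0) →
      (∀ x, 0 ≤ f x) → 0 ≤ T f) :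
    IsLUB {r : ℝ | ∃ f : X → ℝ, LipschitzWith 1 f ∧ (∀ a ∈ A, f a = 0) ∧ r = |T f|}
      (T (fun x => Metric.infDist x A)) :=
  stmt13_general hAne T Tadd Tsmul Tpos
end

section
/- Let (X, d) be a complete separable metric space and A ⊆ X nonempty closed. For points x, y ∈ X, the relative 1-Wasserstein distance between the Dirac measures δ_x and δ_y equals d̄(x, y) = min(d(x, y), d_A(x) + d_A(y)). -/
/-!
Coupling `δ_x` with `δ_y` through `δ_(x,y)` gives the upper bound. For the lower bound, a
relative coupling `π` is concentrated on `(A ∪ {x}) × (A ∪ {y})`, and on that set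
`d̄(p, q) ≥ s·1[p = x] + t·1[q = y]` for any split `s + t = d̄(x, y)` with `s ≤ d_A(x)` and
`t ≤ d_A(y)`. Both terms vanish on `A`, so only the marginals off `A` see them, and they integrate
to `s + t`.
-/

open MeasureTheory
open scoped ENNReal

/-- `d̄(x, y) = min(d(x, y), d_A(x) + d_A(y))`. -/
noncomputable def dbar {X : Type*} [MetricSpace X] (A : Set X) (x y : X) : ℝ :=
  min (dist x y) (Metric.infDist x A + Metric.infDist y A)

section Relative

variable {X : Type*} [MeasurableSpace X] {A : Set X}

lemma lintegral_eq_of_restrict_compl_eq {μ ν : Measure X} (h : μ.restrict Aᶜ = ν.restrict Aᶜ)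
    {f : X → ℝ≥0∞} (hf : ∀ a ∈ A, f a = 0) : ∫⁻ z, f z ∂μ = ∫⁻ z, f z ∂ν := by
  have hsupp : Function.support f ⊆ Aᶜ := fun z hz hzA => hz (hf z hzA)
  rw [← setLIntegral_eq_of_support_subset hsupp, h, setLIntegral_eq_of_support_subset hsupp]

lemma ae_mem_insert_of_restrict_compl_eq_dirac [MeasurableSingletonClass X] {μ : Measure X}
    {x : X} (h : μ.restrict Aᶜ = (Measure.dirac x).restrict Aᶜ) : ∀ᵐ z ∂μ, z ∈ insert x A := by
  have hsub : (insert x A)ᶜ ⊆ Aᶜ := Set.compl_subset_compl.2 (Set.subset_insert x A)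
  change μ (insert x A)ᶜ = 0
  rw [← Measure.restrict_eq_self μ hsub, h, Measure.restrict_eq_self _ hsub, Measure.dirac_apply]
  simp

lemma lintegral_comp_eq_of_restrict_compl_map_eq_dirac [MeasurableSingletonClass X]
    {Ω : Type*} [MeasurableSpace Ω] {π : Measure Ω} {g : Ω → X} (hg : Measurable g) {x : X}
    (h : (π.map g).restrict Aᶜ = (Measure.dirac x).restrict Aᶜ) {f : X → ℝ≥0∞}
    (hf : Measurable f) (hfA : ∀ a ∈ A, f a = 0) : ∫⁻ ω, f (g ω) ∂π = f x := by
  rw [← lintegral_map hf hg, lintegral_eq_of_restrict_compl_eq h hfA, lintegral_dirac]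

end Relative

section Dbar

variable {X : Type*} [MetricSpace X] {A : Set X}

lemma dbar_nonneg (p q : X) : 0 ≤ dbar A p q :=
  le_min dist_nonneg (add_nonneg Metric.infDist_nonneg Metric.infDist_nonneg)

lemma dbar_of_mem_left {p : X} (hp : p ∈ A) (q : X) : dbar A p q = Metric.infDist q A := by
  rw [dbar, Metric.infDist_zero_of_mem hp, zero_add, dist_comm]
  exact min_eq_right (Metric.infDist_le_dist_of_mem hp)

lemma dbar_of_mem_right (p : X) {q : X} (hq : q ∈ A) : dbar A p q = Metric.infDist p A := by
  rw [dbar, Metric.infDist_zero_of_mem hq, add_zero]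
  exact min_eq_right (Metric.infDist_le_dist_of_mem hq)

lemma exists_add_eq_dbar (A : Set X) (x y : X) :
    ∃ s t : ℝ, 0 ≤ s ∧ 0 ≤ t ∧ s ≤ Metric.infDist x A ∧ t ≤ Metric.infDist y A ∧
      s + t = dbar A x y := by
  refine ⟨min (Metric.infDist x A) (dbar A x y), dbar A x y - min (Metric.infDist x A) (dbar A x y),
    le_min Metric.infDist_nonneg (dbar_nonneg x y), sub_nonneg.2 (min_le_right _ _),
    min_le_left _ _, ?_, add_sub_cancel _ _⟩
  have : dbar A x y ≤ Metric.infDist x A + Metric.infDist y A := min_le_right _ _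
  rcases min_choice (Metric.infDist x A) (dbar A x y) with h | h <;> rw [h] <;>
    linarith [Metric.infDist_nonneg (x := y) (s := A)]

lemma indicator_singleton_eq_zero_of_le_infDist {x : X} {s : ℝ} (hs : s ≤ Metric.infDist x A)
    {a : X} (ha : a ∈ A) : ({x} : Set X).indicator (fun _ => ENNReal.ofReal s) a = 0 := by
  refine Set.indicator_apply_eq_zero.2 fun (hax : a = x) => ENNReal.ofReal_eq_zero.2 ?_
  rwa [← Metric.infDist_zero_of_mem (hax ▸ ha)]

lemma indicator_add_indicator_le_dbar {x y : X} {s t : ℝ} (hs : 0 ≤ s) (ht : 0 ≤ t)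
    (hsx : s ≤ Metric.infDist x A) (hty : t ≤ Metric.infDist y A) (hst : s + t = dbar A x y)
    {p q : X} (hp : p ∈ insert x A) (hq : q ∈ insert y A) :
    ({x} : Set X).indicator (fun _ => ENNReal.ofReal s) p +
      ({y} : Set X).indicator (fun _ => ENNReal.ofReal t) q ≤ ENNReal.ofReal (dbar A p q) := by
  rcases hp with rfl | hp <;> rcases hq with rfl | hq
  · simp only [Set.indicator_of_mem (Set.mem_singleton _)]
    rw [← ENNReal.ofReal_add hs ht, hst]
  · rw [indicator_singleton_eq_zero_of_le_infDist hty hq, add_zero, dbar_of_mem_right p hq,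
      Set.indicator_of_mem (Set.mem_singleton _)]
    exact ENNReal.ofReal_le_ofReal hsx
  · rw [indicator_singleton_eq_zero_of_le_infDist hsx hp, zero_add, dbar_of_mem_left hp,
      Set.indicator_of_mem (Set.mem_singleton _)]
    exact ENNReal.ofReal_le_ofReal hty
  · rw [indicator_singleton_eq_zero_of_le_infDist hsx hp,
      indicator_singleton_eq_zero_of_le_infDist hty hq, add_zero]
    exact zero_le

end Dbar

theorem ofReal_dbar_le_lintegral {X : Type*} [MetricSpace X] [MeasurableSpace X] [BorelSpace X]
    {A : Set X} (hA : IsClosed A) {x y : X} {π : Measure (X × X)}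
    (h₁ : ∀ E : Set X, MeasurableSet E → E ⊆ Aᶜ → π (Prod.fst ⁻¹' E) = Measure.dirac x E)
    (h₂ : ∀ E : Set X, MeasurableSet E → E ⊆ Aᶜ → π (Prod.snd ⁻¹' E) = Measure.dirac y E) :
    ENNReal.ofReal (dbar A x y) ≤ ∫⁻ p, ENNReal.ofReal (dbar A p.1 p.2) ∂π := by
  have hfst : (π.map Prod.fst).restrict Aᶜ = (Measure.dirac x).restrict Aᶜ :=
    (Measure.restrict_congr_meas hA.measurableSet.compl).2 fun E hEA hE =>
      (Measure.map_apply measurable_fst hE).trans (h₁ E hE hEA)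
  have hsnd : (π.map Prod.snd).restrict Aᶜ = (Measure.dirac y).restrict Aᶜ :=
    (Measure.restrict_congr_meas hA.measurableSet.compl).2 fun E hEA hE =>
      (Measure.map_apply measurable_snd hE).trans (h₂ E hE hEA)
  obtain ⟨s, t, hs, ht, hsx, hty, hst⟩ := exists_add_eq_dbar A x y
  set c : X → ℝ≥0∞ := ({x} : Set X).indicator fun _ => ENNReal.ofReal s
  set e : X → ℝ≥0∞ := ({y} : Set X).indicator fun _ => ENNReal.ofReal t
  have hc : Measurable c := measurable_const.indicator (measurableSet_singleton x)
  have he : Measurable e := measurable_const.indicator (measurableSet_singleton y)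
  have hc_int : ∫⁻ p, c p.1 ∂π = ENNReal.ofReal s :=
    (lintegral_comp_eq_of_restrict_compl_map_eq_dirac measurable_fst hfst hc
      fun _ => indicator_singleton_eq_zero_of_le_infDist hsx).trans
      (Set.indicator_of_mem (Set.mem_singleton x) _)
  have he_int : ∫⁻ p, e p.2 ∂π = ENNReal.ofReal t :=
    (lintegral_comp_eq_of_restrict_compl_map_eq_dirac measurable_snd hsnd he
      fun _ => indicator_singleton_eq_zero_of_le_infDist hty).trans
      (Set.indicator_of_mem (Set.mem_singleton y) _)
  have hae : ∀ᵐ p ∂π, c p.1 + e p.2 ≤ ENNReal.ofReal (dbar A p.1 p.2) := by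
    filter_upwards [ae_of_ae_map measurable_fst.aemeasurable
        (ae_mem_insert_of_restrict_compl_eq_dirac hfst),
      ae_of_ae_map measurable_snd.aemeasurable (ae_mem_insert_of_restrict_compl_eq_dirac hsnd)]
      with p hp₁ hp₂
    exact indicator_add_indicator_le_dbar hs ht hsx hty hst hp₁ hp₂
  calc ENNReal.ofReal (dbar A x y) = ENNReal.ofReal s + ENNReal.ofReal t := by
        rw [← hst, ENNReal.ofReal_add hs ht]
    _ = ∫⁻ p, c p.1 + e p.2 ∂π := by
        rw [lintegral_add_left (f := fun p : X × X => c p.1) (hc.comp measurable_fst), hc_int,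
          he_int]
    _ ≤ ∫⁻ p, ENNReal.ofReal (dbar A p.1 p.2) ∂π := lintegral_mono_ae hae

theorem stmt19_general {X : Type*} [MetricSpace X] [MeasurableSpace X] [BorelSpace X]
    {A : Set X} (hA : IsClosed A) (x y : X) :
    sInf {c : ℝ≥0∞ | ∃ π : Measure (X × X),
        (∀ E : Set X, MeasurableSet E → E ⊆ Aᶜ →
          π (Prod.fst ⁻¹' E) = Measure.dirac x E) ∧
        (∀ E : Set X, MeasurableSet E → E ⊆ Aᶜ →
          π (Prod.snd ⁻¹' E) = Measure.dirac y E) ∧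
        c = ∫⁻ p, ENNReal.ofReal (dbar A p.1 p.2) ∂π} =
      ENNReal.ofReal (dbar A x y) := by
  refine le_antisymm (sInf_le ⟨Measure.dirac (x, y), ?_, ?_, ?_⟩) ?_
  · intro E hE _
    rw [← Measure.map_apply measurable_fst hE, Measure.map_dirac]
  · intro E hE _
    rw [← Measure.map_apply measurable_snd hE, Measure.map_dirac]
  · exact (lintegral_dirac (x, y) fun p => ENNReal.ofReal (dbar A p.1 p.2)).symm
  · refine le_sInf ?_
    rintro c ⟨π, h₁, h₂, rfl⟩
    exact ofReal_dbar_le_lintegral hA h₁ h₂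

/-- The relative 1-Wasserstein distance between Dirac measures `δ_x` and `δ_y`
(the infimum over relative couplings `π` of `∫ d̄ dπ`) equals `d̄(x, y)`. -/
theorem stmt19 {X : Type*} [MetricSpace X] [MeasurableSpace X] [BorelSpace X]
    [CompleteSpace X] [TopologicalSpace.SeparableSpace X]
    {A : Set X} (hA : IsClosed A) (hAne : A.Nonempty) (x y : X) :
    sInf {c : ℝ≥0∞ | ∃ π : Measure (X × X),
        (∀ E : Set X, MeasurableSet E → E ⊆ Aᶜ →
          π (Prod.fst ⁻¹' E) = Measure.dirac x E) ∧
        (∀ E : Set X, MeasurableSet E → E ⊆ Aᶜ →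
          π (Prod.snd ⁻¹' E) = Measure.dirac y E) ∧
        c = ∫⁻ p, ENNReal.ofReal (dbar A p.1 p.2) ∂π} =
      ENNReal.ofReal (dbar A x y) :=
  stmt19_general hA x y
end
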